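/- Let V ⊂ H ⊂ V' be a Gelfand triple of a Hilbert space H. Suppose u : (0,T) → V' has the following properties at a point t₀: (a) u(t₀) ∈ V; (b) u is Fréchet differentiable at t₀ as a map into V' with derivative u'(t₀); (c) the real function φ(t) = ‖u(t)‖_H² (with u(t) ∈ H ⊂ V' for a.e. t, φ defined a.e.) admits a version that is classically differentiable at t₀ and agrees with ‖u‖_H² on a set 𝒮 containing t₀ with t₀ a limit point of 𝒮 from both sides, and u(t) ∈ V for t ∈ 𝒮. Then the classical derivative of that version at t₀ equals 2⟨u'(t₀), u(t₀)⟩. -/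

import Mathlib

open MeasureTheory Set Filter Topology Asymptotics

/-- Let `V ⊂ H ⊂ V'` be a Gelfand triple of a Hilbert space `H` (embeddings
`ιVH`, `ιHV'`, duality pairing `pair` extending the inner product of `H`). Suppose
`u : (0,T) → V'` satisfies at `t₀`: (a) `u(t₀) ∈ V` (witnessed by `v t₀`); (b) `u` is Fréchet
differentiable at `t₀` as a map into `V'` with derivative `u'₀`; (c) the function
`ψ(t) = ‖u(t)‖_H²` admits a version classically differentiable at `t₀` agreeing with `‖u‖_H²`
on a set `𝒮 ∋ t₀` which clusters at `t₀` from both sides, with `u(t) ∈ V` for `t ∈ 𝒮`.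
Then the classical derivative of that version at `t₀` equals `2⟨u'(t₀), u(t₀)⟩`. -/
theorem stmt8 {V H V' : Type*}
    [NormedAddCommGroup H] [InnerProductSpace ℝ H] [CompleteSpace H]
    [NormedAddCommGroup V] [NormedSpace ℝ V] [CompleteSpace V]
    [NormedAddCommGroup V'] [NormedSpace ℝ V'] [CompleteSpace V']
    (ιVH : V →L[ℝ] H) (hVH_dense : DenseRange ιVH) (hVH_inj : Function.Injective ιVH)
    (ιHV' : H →L[ℝ] V') (hHV'_dense : DenseRange ιHV') (hHV'_inj : Function.Injective ιHV')
    (pair : V' →L[ℝ] V →L[ℝ] ℝ)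
    (hpair : ∀ (h : H) (v : V), pair (ιHV' h) v = (inner ℝ h (ιVH v) : ℝ))
    (u : ℝ → V') (t₀ : ℝ) (u'₀ : V') (v : ℝ → V) (S : Set ℝ) (ψ : ℝ → ℝ)
    (ht₀S : t₀ ∈ S)
    (hVval : ∀ t ∈ S, u t = ιHV' (ιVH (v t)))
    (hfrechet : (fun t => u t - u t₀ - (t - t₀) • u'₀) =o[𝓝 t₀] fun t => t - t₀)
    (hψdiff : DifferentiableAt ℝ ψ t₀)
    (hagree : ∀ t ∈ S, ψ t = ‖ιVH (v t)‖^2)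
    (hright : (𝓝[>] t₀ ⊓ Filter.principal S).NeBot)
    (hleft : (𝓝[<] t₀ ⊓ Filter.principal S).NeBot) :
    deriv ψ t₀ = 2 * pair u'₀ (v t₀) := by
  set D := deriv ψ t₀ with hD
  set c := D - 2 * pair u'₀ (v t₀) with hc
  have hg : (fun t => ψ t - ψ t₀ - (t - t₀) * D) =o[𝓝 t₀] fun t => t - t₀ := by
    have h := hψdiff.hasDerivAt
    rw [hasDerivAt_iff_isLittleO] at h
    simpa [smul_eq_mul, mul_comm] using h
  have he : (fun t => 2 * (pair.flip (v t₀)) (u t - u t₀ - (t - t₀) • u'₀))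
      =o[𝓝 t₀] fun t => t - t₀ :=
    (((pair.flip (v t₀)).isBigO_comp _ _).trans_isLittleO hfrechet).const_mul_left 2
  set F : ℝ → ℝ := fun t => (ψ t - ψ t₀ - (t - t₀) * D)
      - 2 * (pair.flip (v t₀)) (u t - u t₀ - (t - t₀) • u'₀) with hF
  have hFo : F =o[𝓝 t₀] fun t => t - t₀ := hg.sub he
  have hdiv : Tendsto (fun t => F t / (t - t₀)) (𝓝[≠] t₀) (𝓝 0) :=
    (hFo.mono nhdsWithin_le_nhds).tendsto_div_nhds_zero
  have key : ∀ t ∈ S, F t + (t - t₀) * c = ‖ιVH (v t) - ιVH (v t₀)‖ ^ 2 := by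
    intro t ht
    have h1 : ψ t = ‖ιVH (v t)‖ ^ 2 := hagree t ht
    have h2 : ψ t₀ = ‖ιVH (v t₀)‖ ^ 2 := hagree t₀ ht₀S
    have h3 : pair (u t) (v t₀) = (inner ℝ (ιVH (v t)) (ιVH (v t₀)) : ℝ) := by
      rw [hVval t ht, hpair]
    have h4 : pair (u t₀) (v t₀) = (inner ℝ (ιVH (v t₀)) (ιVH (v t₀)) : ℝ) := by
      rw [hVval t₀ ht₀S, hpair]
    have h5 : (inner ℝ (ιVH (v t₀)) (ιVH (v t₀)) : ℝ) = ‖ιVH (v t₀)‖ ^ 2 :=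
      real_inner_self_eq_norm_sq _
    have h6 : ‖ιVH (v t) - ιVH (v t₀)‖ ^ 2
        = ‖ιVH (v t)‖ ^ 2 - 2 * (inner ℝ (ιVH (v t)) (ιVH (v t₀)) : ℝ) + ‖ιVH (v t₀)‖ ^ 2 :=
      norm_sub_sq_real _ _
    have h7 : pair ((t - t₀) • u'₀) (v t₀) = (t - t₀) * pair u'₀ (v t₀) := by
      simp
    simp only [hF, hc, ContinuousLinearMap.flip_apply, map_sub,
      ContinuousLinearMap.sub_apply]
    rw [h1, h2, h3, h4, h6, h7]
    ring_nf
    linarith [h5]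
  have hpos : ∀ t ∈ S, 0 ≤ F t + (t - t₀) * c := fun t ht => by
    rw [key t ht]; positivity
  -- right side
  have hcge : 0 ≤ c := by
    set l := 𝓝[>] t₀ ⊓ 𝓟 S with hl
    have hle : l ≤ 𝓝[≠] t₀ :=
      le_trans inf_le_left (nhdsWithin_mono _ fun x hx => ne_of_gt hx)
    have htend : Tendsto (fun t => F t / (t - t₀) + c) l (𝓝 (0 + c)) :=
      ((hdiv.mono_left hle).add tendsto_const_nhds)
    have hev : ∀ᶠ t in l, 0 ≤ F t / (t - t₀) + c := by
      have hS : ∀ᶠ t in l, t ∈ S :=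
        Eventually.filter_mono inf_le_right (eventually_principal.mpr fun x hx => hx)
      have hgt : ∀ᶠ t in l, t ∈ Ioi t₀ :=
        Eventually.filter_mono inf_le_left self_mem_nhdsWithin
      filter_upwards [hS, hgt] with t ht hgt
      have hd : 0 < t - t₀ := sub_pos.mpr hgt
      have : 0 ≤ (F t + (t - t₀) * c) / (t - t₀) := div_nonneg (hpos t ht) hd.le
      calc (0:ℝ) ≤ (F t + (t - t₀) * c) / (t - t₀) := this
        _ = F t / (t - t₀) + c := by field_simp
    have := ge_of_tendsto htend hev
    linarith
  have hcle : c ≤ 0 := by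
    set l := 𝓝[<] t₀ ⊓ 𝓟 S with hl
    have hle : l ≤ 𝓝[≠] t₀ :=
      le_trans inf_le_left (nhdsWithin_mono _ fun x hx => ne_of_lt hx)
    have htend : Tendsto (fun t => F t / (t - t₀) + c) l (𝓝 (0 + c)) :=
      ((hdiv.mono_left hle).add tendsto_const_nhds)
    have hev : ∀ᶠ t in l, F t / (t - t₀) + c ≤ 0 := by
      have hS : ∀ᶠ t in l, t ∈ S :=
        Eventually.filter_mono inf_le_right (eventually_principal.mpr fun x hx => hx)
      have hlt : ∀ᶠ t in l, t ∈ Iio t₀ :=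
        Eventually.filter_mono inf_le_left self_mem_nhdsWithin
      filter_upwards [hS, hlt] with t ht hlt
      have hd : t - t₀ < 0 := sub_neg.mpr hlt
      have : (F t + (t - t₀) * c) / (t - t₀) ≤ 0 :=
        div_nonpos_iff.mpr (Or.inl ⟨hpos t ht, hd.le⟩)
      calc F t / (t - t₀) + c = (F t + (t - t₀) * c) / (t - t₀) := by
            rw [add_div, mul_div_cancel_left₀ _ (by linarith : t - t₀ ≠ 0)]
        _ ≤ 0 := this
    have := le_of_tendsto htend hev
    linarith
  have : c = 0 := le_antisymm hcle hcge
  rw [hc] at this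
  linarith
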